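/- For ζ_ℤ(s) = 4^{-s} π^{-1/2} Γ(1/2 - s)/Γ(1 - s), the functional equation ζ_ℤ(s/2) = 2^{1-2s} tan(πs/2) ζ_ℤ((1-s)/2) holds for all s where both sides are defined. -/
import Mathlib


open Complex

/-- The (meromorphically continued) spectral zeta function of the graph ℤ. -/
noncomputable def zetaZ (s : ℂ) : ℂ :=
  (4 : ℂ) ^ (-s) * ((Real.sqrt Real.pi : ℂ))⁻¹ *
    Complex.Gamma (1 / 2 - s) / Complex.Gamma (1 - s)

theorem zetaZ_functional_equation (s : ℂ) (h : ∀ n : ℤ, s ≠ (n : ℂ)) :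
    zetaZ (s / 2) =
      (2 : ℂ) ^ (1 - 2 * s) * Complex.tan (Real.pi * s / 2) * zetaZ ((1 - s) / 2) := by
  have hπ : (Real.pi : ℂ) ≠ 0 := by simpa using Real.pi_ne_zero
  -- nonvanishing of sin and cos
  have hsin : Complex.sin ((Real.pi : ℂ) * s / 2) ≠ 0 := by
    rw [Complex.sin_ne_zero_iff]
    intro k hk
    apply h (2 * k)
    have h0 : (Real.pi : ℂ) * (s - 2 * k) = 0 := by linear_combination 2 * hk
    rcases mul_eq_zero.mp h0 with h' | h'
    · exact absurd h' hπ
    · push_cast; linear_combination h'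
  have hcos : Complex.cos ((Real.pi : ℂ) * s / 2) ≠ 0 := by
    rw [Complex.cos_ne_zero_iff]
    intro k hk
    apply h (2 * k + 1)
    have h0 : (Real.pi : ℂ) * (s - (2 * k + 1)) = 0 := by linear_combination 2 * hk
    rcases mul_eq_zero.mp h0 with h' | h'
    · exact absurd h' hπ
    · push_cast; linear_combination h'
  -- nonvanishing of Gamma factors
  have hGa : Complex.Gamma (s / 2) ≠ 0 := by
    refine Complex.Gamma_ne_zero fun m hm => h (-(2 * m)) ?_
    push_cast; linear_combination 2 * hm
  have hGb : Complex.Gamma (1 - s / 2) ≠ 0 := by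
    refine Complex.Gamma_ne_zero fun m hm => h (2 * m + 2) ?_
    push_cast; linear_combination (-2 : ℂ) * hm
  have hGc : Complex.Gamma ((1 + s) / 2) ≠ 0 := by
    refine Complex.Gamma_ne_zero fun m hm => h (-(2 * m) - 1) ?_
    push_cast; linear_combination 2 * hm
  have hGd : Complex.Gamma ((1 - s) / 2) ≠ 0 := by
    refine Complex.Gamma_ne_zero fun m hm => h (2 * m + 1) ?_
    push_cast; linear_combination (-2 : ℂ) * hm
  -- reflection formulas
  have h1 : Complex.Gamma (s / 2) * Complex.Gamma (1 - s / 2)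
      = (Real.pi : ℂ) / Complex.sin ((Real.pi : ℂ) * s / 2) := by
    have := Complex.Gamma_mul_Gamma_one_sub (s / 2)
    rwa [show (Real.pi : ℂ) * (s / 2) = (Real.pi : ℂ) * s / 2 by ring] at this
  have h2 : Complex.Gamma ((1 + s) / 2) * Complex.Gamma ((1 - s) / 2)
      = (Real.pi : ℂ) / Complex.cos ((Real.pi : ℂ) * s / 2) := by
    have := Complex.Gamma_mul_Gamma_one_sub ((1 + s) / 2)
    rw [show (1 : ℂ) - (1 + s) / 2 = (1 - s) / 2 by ring] at this
    rw [this, show (Real.pi : ℂ) * ((1 + s) / 2) = Real.pi / 2 + (Real.pi : ℂ) * s / 2 by ring,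
      Complex.sin_add, Complex.sin_pi_div_two, Complex.cos_pi_div_two]
    ring_nf
  -- solve for two of the Gamma values
  have e1 : Complex.Gamma (1 - s / 2)
      = (Real.pi : ℂ) / (Complex.sin ((Real.pi : ℂ) * s / 2) * Complex.Gamma (s / 2)) := by
    field_simp at h1 ⊢
    linear_combination h1
  have e2 : Complex.Gamma ((1 - s) / 2)
      = (Real.pi : ℂ) / (Complex.cos ((Real.pi : ℂ) * s / 2) * Complex.Gamma ((1 + s) / 2)) := by
    field_simp at h2 ⊢
    linear_combination h2
  -- power identity
  have h2ne : (2 : ℂ) ≠ 0 := two_ne_zero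
  have h4 : ∀ w : ℂ, (4 : ℂ) ^ w = (2 : ℂ) ^ w * (2 : ℂ) ^ w := by
    intro w
    rw [show (4 : ℂ) = ((2 : ℝ) : ℂ) * ((2 : ℝ) : ℂ) by norm_num,
      Complex.mul_cpow_ofReal_nonneg (by norm_num) (by norm_num)]
    norm_num
  have hp : (4 : ℂ) ^ (-(s / 2)) = (2 : ℂ) ^ (1 - 2 * s) * (4 : ℂ) ^ (-((1 - s) / 2)) := by
    rw [h4, h4, ← Complex.cpow_add _ _ h2ne, ← Complex.cpow_add _ _ h2ne,
      ← Complex.cpow_add _ _ h2ne]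
    ring_nf
  have hsqrt : ((Real.sqrt Real.pi : ℝ) : ℂ) ≠ 0 :=
    ofReal_ne_zero.mpr (ne_of_gt (Real.sqrt_pos.mpr Real.pi_pos))
  have h4ne : (4 : ℂ) ^ (-((1 - s) / 2)) ≠ 0 := by
    rw [Complex.cpow_def_of_ne_zero (by norm_num)]; exact Complex.exp_ne_zero _
  -- main computation
  unfold zetaZ
  rw [Complex.tan_eq_sin_div_cos,
    show (1 : ℂ) / 2 - s / 2 = (1 - s) / 2 by ring,
    show (1 : ℂ) / 2 - (1 - s) / 2 = s / 2 by ring,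
    show (1 : ℂ) - (1 - s) / 2 = (1 + s) / 2 by ring, hp, e1, e2]
  field_simp
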